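/- Let Q(x) = Tx + Rb with T, R satisfying T + RA = I, range(R) ⊆ range(Aᵀ), ‖T P_{range(Aᵀ)}‖ < 1, and let {C_k}_{k≥0} be box projections with V*_k := Im(C_k) ∩ (Δ + LSS(A;b)) ≠ ∅ for all k and the nesting property: for every ℓ there is k(ℓ) ≥ ℓ with Im(C_{k+1}) ⊆ Im(C_ℓ) for all k ≥ k(ℓ). Then the family T_k := C_k ∘ Q has nonempty common fixed point set F, and any sequence x^{k+1} = C_{k+1}(Q(x^k)) satisfies: for each ℓ there is k(ℓ) with ‖C_{k+1}(Q(x^k)) − z‖ ≤ ‖C_ℓ(Q(x^k)) − z‖ for all z ∈ F and k ≥ k(ℓ). -/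

import Mathlib

open Matrix

/-- The continuous linear map on Euclidean spaces induced by a matrix. -/
noncomputable def mulE {m n : ℕ} (A : Matrix (Fin m) (Fin n) ℝ) :
    EuclideanSpace ℝ (Fin n) →L[ℝ] EuclideanSpace ℝ (Fin m) :=
  LinearMap.toContinuousLinearMap (Matrix.toEuclideanLin A)

/-- The orthogonal projection of the ambient space onto a subspace, as a map of the
ambient space. -/
noncomputable def projCLM {n : ℕ} (V : Submodule ℝ (EuclideanSpace ℝ (Fin n))) :
    EuclideanSpace ℝ (Fin n) →L[ℝ] EuclideanSpace ℝ (Fin n) :=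
  V.subtypeL.comp (Submodule.orthogonalProjection V)

/-!
Since `T = I - RA` and `range R ⊆ range(Aᵀ)`, `T` maps `range(Aᵀ)` into itself, so the defining
equation `Δ - T P_{range(Aᵀ)} Δ = R P_{null(Aᵀ)} b` forces `Δ ∈ range(Aᵀ)`. Every least squares
solution `u` has `Au = P_{range(A)} b = b - P_{null(Aᵀ)} b`, and `T + RA = I` then gives
`Q(Δ + u) = Δ + u`. The sets `Im(C_k) ∩ (Δ + LSS(A;b))` are compact and nonempty, and the nesting
condition gives them the finite intersection property; a common point is fixed by every
`C_k ∘ Q`. Condition 1 holds coordinatewise: clamping to a smaller interval containing `z_i`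
never moves a coordinate farther from `z_i`.
-/

open Set Filter

theorem nonempty_iInter_of_eventually_subset {X : Type*} [TopologicalSpace X] {S : ℕ → Set X}
    (hc : IsCompact (S 0)) (hcl : ∀ k, IsClosed (S k)) (hne : ∀ k, (S k).Nonempty)
    (hnest : ∀ ℓ, ∀ᶠ k in atTop, S (k + 1) ⊆ S ℓ) : (⋂ k, S k).Nonempty := by
  refine (hc.inter_iInter_nonempty S hcl fun u => ?_).mono inter_subset_right
  obtain ⟨k, hk0, hku⟩ := ((hnest 0).and ((eventually_all_finset u).2 fun ℓ _ => hnest ℓ)).exists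
  obtain ⟨x, hx⟩ := hne (k + 1)
  exact ⟨x, hk0 hx, mem_iInter₂.2 fun ℓ hℓ => hku ℓ hℓ hx⟩

theorem isClosed_setOf_forall_le {X α : Type*} [TopologicalSpace X] [TopologicalSpace α]
    [Preorder α] [OrderClosedTopology α] {g : X → α} (hg : Continuous g) :
    IsClosed {x | ∀ z, g x ≤ g z} := by
  simp only [ofPred_forall]
  exact isClosed_iInter fun z => isClosed_le hg continuous_const

noncomputable def clamp (lo hi t : ℝ) : ℝ := if t < lo then lo else if hi < t then hi else t

theorem clamp_mem_Icc {lo hi : ℝ} (h : lo ≤ hi) (t : ℝ) : clamp lo hi t ∈ Icc lo hi := by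
  unfold clamp
  split_ifs with h₁ h₂
  · exact ⟨le_rfl, h⟩
  · exact ⟨h, le_rfl⟩
  · exact ⟨not_lt.1 h₁, not_lt.1 h₂⟩

theorem clamp_of_mem_Icc {lo hi t : ℝ} (ht : t ∈ Icc lo hi) : clamp lo hi t = t := by
  simp [clamp, not_lt.2 ht.1, not_lt.2 ht.2]

theorem abs_clamp_sub_le_of_le {lo hi lo' hi' c : ℝ} (hlo : lo ≤ lo') (hhi : hi' ≤ hi)
    (hc : c ∈ Icc lo' hi') (t : ℝ) : |clamp lo' hi' t - c| ≤ |clamp lo hi t - c| := by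
  obtain ⟨hc₁, hc₂⟩ := hc
  rw [← sq_le_sq]
  unfold clamp
  split_ifs <;> nlinarith

section Box

variable {n : ℕ}

def box (lo hi : Fin n → ℝ) : Set (EuclideanSpace ℝ (Fin n)) := WithLp.ofLp ⁻¹' Icc lo hi

noncomputable def boxProj (lo hi : Fin n → ℝ) (x : EuclideanSpace ℝ (Fin n)) :
    EuclideanSpace ℝ (Fin n) :=
  WithLp.toLp 2 fun i => clamp (lo i) (hi i) (x i)

theorem mem_box {lo hi : Fin n → ℝ} {x : EuclideanSpace ℝ (Fin n)} :
    x ∈ box lo hi ↔ ∀ i, lo i ≤ x i ∧ x i ≤ hi i := by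
  simp [box, Pi.le_def, forall_and]

theorem isCompact_box (lo hi : Fin n → ℝ) : IsCompact (box lo hi) :=
  (EuclideanSpace.equiv (Fin n) ℝ).toHomeomorph.isCompact_preimage.2 isCompact_Icc

theorem box_subset_box_iff {lo hi lo' hi' : Fin n → ℝ} (h : lo ≤ hi) :
    box lo hi ⊆ box lo' hi' ↔ lo' ≤ lo ∧ hi ≤ hi' :=
  (WithLp.ofLp_surjective 2).preimage_subset_preimage_iff.trans (Icc_subset_Icc_iff h)

theorem boxProj_mem {lo hi : Fin n → ℝ} (h : lo ≤ hi) (x : EuclideanSpace ℝ (Fin n)) :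
    boxProj lo hi x ∈ box lo hi :=
  mem_box.2 fun i => clamp_mem_Icc (h i) (x i)

theorem boxProj_eq_self {lo hi : Fin n → ℝ} {x : EuclideanSpace ℝ (Fin n)} (hx : x ∈ box lo hi) :
    boxProj lo hi x = x := by
  ext i
  exact clamp_of_mem_Icc (mem_box.1 hx i)

theorem norm_boxProj_sub_le_of_le {lo hi lo' hi' : Fin n → ℝ} (hlo : lo ≤ lo') (hhi : hi' ≤ hi)
    {z : EuclideanSpace ℝ (Fin n)} (hz : z ∈ box lo' hi') (x : EuclideanSpace ℝ (Fin n)) :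
    ‖boxProj lo' hi' x - z‖ ≤ ‖boxProj lo hi x - z‖ := by
  rw [EuclideanSpace.norm_eq, EuclideanSpace.norm_eq]
  gcongr with i
  exact abs_clamp_sub_le_of_le (hlo i) (hhi i) (mem_box.1 hz i) (x i)

end Box

theorem eq_starProjection_of_norm_sub_le {F : Type*} [NormedAddCommGroup F] [InnerProductSpace ℝ F]
    {K : Submodule ℝ F} [K.HasOrthogonalProjection] {y b : F} (hy : y ∈ K)
    (h : ‖y - b‖ ≤ ‖K.starProjection b - b‖) : y = K.starProjection b := by
  set p := K.starProjection b
  have horth : inner ℝ (y - p) (p - b) = 0 := by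
    refine Submodule.inner_right_of_mem_orthogonal (K.sub_mem hy (K.starProjection_apply_mem b)) ?_
    simpa [p] using Kᗮ.neg_mem (K.sub_starProjection_mem_orthogonal b)
  have hpyth := norm_add_sq_eq_norm_sq_add_norm_sq_real horth
  rw [sub_add_sub_cancel] at hpyth
  have : ‖y - p‖ * ‖y - p‖ = 0 := by
    nlinarith [mul_self_le_mul_self (norm_nonneg _) h, mul_self_nonneg ‖y - p‖]
  exact sub_eq_zero.1 (norm_eq_zero.1 (mul_self_eq_zero.1 this))

theorem apply_eq_starProjection_of_forall_norm_sub_le {E F : Type*} [AddCommGroup E]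
    [Module ℝ E] [NormedAddCommGroup F] [InnerProductSpace ℝ F] {A : E →ₗ[ℝ] F}
    [(LinearMap.range A).HasOrthogonalProjection] {b : F} {w : E}
    (hw : ∀ z, ‖A w - b‖ ≤ ‖A z - b‖) : A w = (LinearMap.range A).starProjection b := by
  obtain ⟨u, hu⟩ := (LinearMap.range A).starProjection_apply_mem b
  exact eq_starProjection_of_norm_sub_le ⟨w, rfl⟩ (hu ▸ hw u)

theorem ContinuousLinearMap.sub_apply_inverse_one_sub {𝕜 E : Type*} [NontriviallyNormedField 𝕜]
    [NormedAddCommGroup E] [NormedSpace 𝕜 E] [CompleteSpace E] {t : E →L[𝕜] E} (h : ‖t‖ < 1)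
    (v : E) : Ring.inverse (1 - t) v - t (Ring.inverse (1 - t) v) = v := by
  simpa using congr($(Ring.mul_inverse_cancel _ (Units.oneSub t h).isUnit) v)

section AffineFixedPoint

variable {𝕜 E F : Type*} [Ring 𝕜] [AddCommGroup E] [Module 𝕜 E] [AddCommGroup F] [Module 𝕜 F]
  {T : E →ₗ[𝕜] E} {R : F →ₗ[𝕜] E} {A : E →ₗ[𝕜] F}

theorem mem_of_sub_apply_mem {S : Submodule 𝕜 E} (hR : ∀ y, R y ∈ S)
    (hTRA : ∀ x, T x + R (A x) = x) {s Δ : E} (hs : s ∈ S) (hΔ : Δ - T s ∈ S) : Δ ∈ S := by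
  have hTs : T s ∈ S := eq_sub_of_add_eq (hTRA s) ▸ S.sub_mem hs (hR _)
  simpa using S.add_mem hΔ hTs

theorem apply_add_add_eq_self (hTRA : ∀ x, T x + R (A x) = x) {Δ u : E} {b p : F}
    (hΔ : Δ - T Δ = R (b - p)) (hu : A u = p) : T (Δ + u) + R b = Δ + u := by
  have hTu : T u = u - R p := eq_sub_of_add_eq (hu ▸ hTRA u)
  have hTΔ : T Δ = Δ - (R b - R p) := by rw [← map_sub, ← hΔ, sub_sub_cancel]
  rw [map_add, hTu, hTΔ]
  abel

end AffineFixedPoint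

section EuclideanMatrix

variable {m n : ℕ}

theorem mulE_apply_add_mulE_apply {A : Matrix (Fin m) (Fin n) ℝ} {T : Matrix (Fin n) (Fin n) ℝ}
    {R : Matrix (Fin n) (Fin m) ℝ} (h : T + R * A = 1) (x : EuclideanSpace ℝ (Fin n)) :
    mulE T x + mulE R (mulE A x) = x := by
  simpa [mulE, Matrix.toLpLin_apply, Matrix.add_mulVec, Matrix.mulVec_mulVec] using
    congr(mulE $h x)

theorem projCLM_eq_starProjection (V : Submodule ℝ (EuclideanSpace ℝ (Fin n))) :
    projCLM V = V.starProjection :=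
  rfl

theorem ker_toEuclideanLin_transpose (A : Matrix (Fin m) (Fin n) ℝ) :
    LinearMap.ker (toEuclideanLin Aᵀ) = (LinearMap.range (toEuclideanLin A))ᗮ := by
  rw [← conjTranspose_eq_transpose_of_trivial, toEuclideanLin_conjTranspose_eq_adjoint,
    LinearMap.orthogonal_range]

end EuclideanMatrix

section FixedPoints

variable {m n : ℕ} (A : Matrix (Fin m) (Fin n) ℝ) (T : Matrix (Fin n) (Fin n) ℝ)
  (R : Matrix (Fin n) (Fin m) ℝ) (b : EuclideanSpace ℝ (Fin m))

/-- The paper's `Δ`, with `Fix(Q) = Δ + LSS(A;b)`. -/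
noncomputable def fixedPointShift : EuclideanSpace ℝ (Fin n) :=
  Ring.inverse (1 - (mulE T).comp (projCLM (LinearMap.range (toEuclideanLin Aᵀ))))
    (mulE R (projCLM (LinearMap.ker (toEuclideanLin Aᵀ)) b))

variable {A T R b}

theorem eq_self_of_sub_fixedPointShift_isLeastSquares (h1 : T + R * A = 1)
    (h2 : ∀ y, mulE R y ∈ LinearMap.range (toEuclideanLin Aᵀ))
    (h3 : ‖(mulE T).comp (projCLM (LinearMap.range (toEuclideanLin Aᵀ)))‖ < 1)
    {w : EuclideanSpace ℝ (Fin n)}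
    (hw : ∀ z, ‖mulE A (w - fixedPointShift A T R b) - b‖ ≤ ‖mulE A z - b‖) :
    mulE T w + mulE R b = w := by
  set S := LinearMap.range (toEuclideanLin Aᵀ)
  set p := (LinearMap.range (toEuclideanLin A)).starProjection b
  set Δ := fixedPointShift A T R b
  have hTRA := mulE_apply_add_mulE_apply h1
  have hker : projCLM (LinearMap.ker (toEuclideanLin Aᵀ)) b = b - p := by
    rw [ker_toEuclideanLin_transpose, projCLM_eq_starProjection,
      Submodule.starProjection_orthogonal_val]
  have hΔ : Δ - mulE T (S.starProjection Δ) = mulE R (b - p) :=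
    hker ▸ ContinuousLinearMap.sub_apply_inverse_one_sub h3 _
  have hΔS : Δ ∈ S := mem_of_sub_apply_mem h2 hTRA (S.starProjection_apply_mem Δ) (hΔ ▸ h2 _)
  rw [S.starProjection_eq_self_iff.2 hΔS] at hΔ
  simpa using apply_add_add_eq_self hTRA hΔ (apply_eq_starProjection_of_forall_norm_sub_le hw)

end FixedPoints

/-- For `Q(x) = Tx + Rb` with the three matrix properties, and box projections `C_k`
whose images satisfy `V*_k = Im(C_k) ∩ (Δ + LSS(A;b)) ≠ ∅` and the eventual nesting
condition, the family `T_k = C_k ∘ Q` has nonempty common fixed point set `F`, and any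
sequence `x^{k+1} = C_{k+1}(Q(x^k))` satisfies Condition 1: for each `ℓ` there is `k(ℓ)`
with `‖C_{k+1}(Q(x^k)) − z‖ ≤ ‖C_ℓ(Q(x^k)) − z‖` for all `z ∈ F` and `k ≥ k(ℓ)`. -/
theorem FCA_hypotheses_satisfied (m n : ℕ)
    (A : Matrix (Fin m) (Fin n) ℝ) (bvec : EuclideanSpace ℝ (Fin m))
    (T : Matrix (Fin n) (Fin n) ℝ)
    (R : Matrix (Fin n) (Fin m) ℝ)
    (h1 : T + R * A = 1)
    (h2 : ∀ y : EuclideanSpace ℝ (Fin m),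
      mulE R y ∈ LinearMap.range (Matrix.toEuclideanLin Aᵀ))
    (Ttil : EuclideanSpace ℝ (Fin n) →L[ℝ] EuclideanSpace ℝ (Fin n))
    (hTtil : Ttil = (mulE T).comp (projCLM (LinearMap.range (Matrix.toEuclideanLin Aᵀ))))
    (h3 : ‖Ttil‖ < 1)
    (Q : EuclideanSpace ℝ (Fin n) → EuclideanSpace ℝ (Fin n))
    (hQ : ∀ x, Q x = mulE T x + mulE R bvec)
    (LSS : Set (EuclideanSpace ℝ (Fin n)))
    (hLSS : LSS = {x | ∀ z, ‖mulE A x - bvec‖ ≤ ‖mulE A z - bvec‖})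
    (Δ : EuclideanSpace ℝ (Fin n))
    (hΔ : Δ = Ring.inverse (1 - Ttil)
      (mulE R (projCLM (LinearMap.ker (Matrix.toEuclideanLin Aᵀ)) bvec)))
    (a b : ℕ → Fin n → ℝ) (hab : ∀ k i, a k i ≤ b k i)
    (C : ℕ → EuclideanSpace ℝ (Fin n) → EuclideanSpace ℝ (Fin n))
    (hC : ∀ k x i, C k x i =
      if x i < a k i then a k i else if b k i < x i then b k i else x i)
    (Box : ℕ → Set (EuclideanSpace ℝ (Fin n)))
    (hBox : ∀ k, Box k = {z | ∀ i, a k i ≤ z i ∧ z i ≤ b k i})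
    (hVne : ∀ k, ({z ∈ Box k | z - Δ ∈ LSS}).Nonempty)
    (hnest : ∀ ℓ : ℕ, ∃ kℓ ≥ ℓ, ∀ k ≥ kℓ, Box (k + 1) ⊆ Box ℓ)
    (F : Set (EuclideanSpace ℝ (Fin n)))
    (hF : F = {z | ∀ k, C k (Q z) = z}) :
    F.Nonempty ∧
    ∀ x : ℕ → EuclideanSpace ℝ (Fin n), (∀ k, x (k + 1) = C (k + 1) (Q (x k))) →
      ∀ ℓ : ℕ, ∃ kℓ : ℕ, ∀ z ∈ F, ∀ k ≥ kℓ,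
        ‖C (k + 1) (Q (x k)) - z‖ ≤ ‖C ℓ (Q (x k)) - z‖ := by
  obtain rfl : C = fun k => boxProj (a k) (b k) := funext₂ fun k x => by ext i; exact hC k x i
  obtain rfl : Box = fun k => box (a k) (b k) :=
    funext fun k => (hBox k).trans (ext fun x => mem_box.symm)
  obtain rfl : Q = fun x => mulE T x + mulE R bvec := funext hQ
  subst hTtil hΔ hLSS hF
  beta_reduce at hnest ⊢
  refine ⟨?_, fun x _ ℓ => ?_⟩
  · have hclosed := (isClosed_setOf_forall_le (g := fun x => ‖mulE A x - bvec‖)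
      (by fun_prop)).preimage (continuous_sub_right (fixedPointShift A T R bvec))
    obtain ⟨z, hz⟩ := nonempty_iInter_of_eventually_subset
      ((isCompact_box (a 0) (b 0)).inter_right hclosed)
      (fun k => (isCompact_box (a k) (b k)).isClosed.inter hclosed) hVne fun ℓ => by
        obtain ⟨kℓ, -, hsub⟩ := hnest ℓ
        exact eventually_atTop.2 ⟨kℓ, fun k hk => inter_subset_inter_left _ (hsub k hk)⟩
    refine ⟨z, fun k => ?_⟩
    obtain ⟨hzk, hzLS⟩ := mem_iInter.1 hz k
    rw [eq_self_of_sub_fixedPointShift_isLeastSquares h1 h2 h3 hzLS, boxProj_eq_self hzk]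
  · obtain ⟨kℓ, -, hsub⟩ := hnest ℓ
    refine ⟨kℓ, fun z hz k hk => ?_⟩
    have hzk : z ∈ box (a (k + 1)) (b (k + 1)) := hz (k + 1) ▸ boxProj_mem (hab (k + 1)) _
    obtain ⟨hlo, hhi⟩ := (box_subset_box_iff (hab (k + 1))).1 (hsub k hk)
    exact norm_boxProj_sub_le_of_le hlo hhi hzk _
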